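/- arXiv:1603.08779 — 2 statements merged into one kernel-verified Lean document; each statement's English description precedes it below -/
import Mathlib

section
/- For every finite tree T with at least three vertices, the domination subdivision number of T satisfies 1 ≤ sd(T) ≤ 3. -/
open SimpleGraph

namespace GenCorona

universe u

/-- A vertex neighborhood partition of a graph `G`: for every vertex `v`, a partition
of the open neighborhood `N_G(v)` into nonempty sets. -/
structure NbhdPartition {V : Type u} (G : SimpleGraph V) where
  part : V → Set (Set V)
  nonempty : ∀ v : V, ∀ A ∈ part v, A.Nonempty
  subset_nbhd : ∀ v : V, ∀ A ∈ part v, A ⊆ G.neighborSet v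
  covers : ∀ v : V, ∀ u ∈ G.neighborSet v, ∃ A ∈ part v, u ∈ A
  eq_of_inter : ∀ v : V, ∀ A ∈ part v, ∀ B ∈ part v, (A ∩ B).Nonempty → A = B

variable {V : Type u}

/-- The vertex type of the general corona `G ∘ 𝒫`: external vertices `(v,1)` are encoded
as `Sum.inl v`, internal vertices `(v,A)` (with `A ∈ 𝒫(v)`) as `Sum.inr ⟨(v,A), _⟩`. -/
abbrev CoronaVert (G : SimpleGraph V) (P : NbhdPartition G) : Type u :=
  V ⊕ {p : V × Set V // p.2 ∈ P.part p.1}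

/-- The general corona `G ∘ 𝒫`. -/
def corona (G : SimpleGraph V) (P : NbhdPartition G) : SimpleGraph (CoronaVert G P) :=
  SimpleGraph.fromRel fun x y =>
    match x, y with
    | Sum.inl v, Sum.inr p => v = p.val.1
    | Sum.inr p, Sum.inr q =>
        G.Adj p.val.1 q.val.1 ∧ q.val.1 ∈ p.val.2 ∧ p.val.1 ∈ q.val.2
    | _, _ => False

/-- The set of external vertices of the general corona. -/
def Ext (G : SimpleGraph V) (P : NbhdPartition G) : Set (CoronaVert G P) :=
  Set.range Sum.inl

/-- A graph is a general corona of a tree if it is isomorphic to `T ∘ 𝒫` for some finite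
tree `T` and some vertex neighborhood partition `𝒫` of `T`. -/
def IsGeneralCoronaOfTree {W : Type*} (H : SimpleGraph W) : Prop :=
  ∃ (n : ℕ) (T : SimpleGraph (Fin n)) (P : NbhdPartition T),
    T.IsTree ∧ Nonempty (H ≃g corona T P)

/-- A graph `H` is a general corona of a tree with external vertex set `E`. -/
def IsGenCoronaWithExt {W : Type*} (H : SimpleGraph W) (E : Set W) : Prop :=
  ∃ (n : ℕ) (T : SimpleGraph (Fin n)) (P : NbhdPartition T),
    T.IsTree ∧ ∃ f : H ≃g corona T P, E = ⇑f ⁻¹' Ext T P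

/-- `D` is a dominating set of `G`. -/
def IsDominating (G : SimpleGraph V) (D : Set V) : Prop :=
  ∀ v ∉ D, ∃ u ∈ D, G.Adj v u

/-- `S` is a 2-packing of `G`: any two distinct vertices of `S` are at distance
greater than 2 (where the extended distance of unreachable vertices is `⊤`). -/
def Is2Packing (G : SimpleGraph V) (S : Set V) : Prop :=
  ∀ u ∈ S, ∀ v ∈ S, u ≠ v → 2 < G.edist u v

/-- A leaf is a vertex of degree 1, i.e. with exactly one neighbor. -/
def IsLeaf (G : SimpleGraph V) (v : V) : Prop :=
  (G.neighborSet v).ncard = 1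

/-- The domination number: the minimum size of a dominating set. -/
noncomputable def dominationNumber (G : SimpleGraph V) : ℕ :=
  sInf {n : ℕ | ∃ D : Set V, IsDominating G D ∧ D.ncard = n}

/-- The graph obtained from `G` by subdividing every edge in `F` (each once):
for each `e ∈ F` a new vertex `Sum.inr e` replaces the edge `e` by a path of length two. -/
def subdivide (G : SimpleGraph V) (F : Set (Sym2 V)) : SimpleGraph (V ⊕ F) :=
  SimpleGraph.fromRel fun x y =>
    match x, y with
    | Sum.inl u, Sum.inl v => G.Adj u v ∧ s(u, v) ∉ F
    | Sum.inl u, Sum.inr e => u ∈ e.val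
    | _, _ => False

/-- The domination subdivision number `sd(G)`: the minimum number of edges which must be
subdivided (each edge at most once) in order to increase the domination number. -/
noncomputable def sd (G : SimpleGraph V) : ℕ :=
  sInf {k : ℕ | ∃ F : Set (Sym2 V), F ⊆ G.edgeSet ∧ F.ncard = k ∧
    dominationNumber G < dominationNumber (subdivide G F)}

/-- The corona `G ∘ K₁`: attach one new pendant vertex `Sum.inr v` to each vertex
`Sum.inl v` of `G`. -/
def coronaK1 (G : SimpleGraph V) : SimpleGraph (V ⊕ V) :=
  SimpleGraph.fromRel fun x y =>
    match x, y with
    | Sum.inl u, Sum.inl w => G.Adj u w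
    | Sum.inl u, Sum.inr w => u = w
    | _, _ => False

/-- The 2-subdivision `S₂(G)`: every edge `uv` is replaced by a path `(u, x₁, x₂, v)`;
the new vertex `Sum.inr ⟨(u,v), _⟩` is the subdivision vertex adjacent to `u`. -/
def twoSubdivision (G : SimpleGraph V) : SimpleGraph (V ⊕ {p : V × V // G.Adj p.1 p.2}) :=
  SimpleGraph.fromRel fun x y =>
    match x, y with
    | Sum.inl u, Sum.inr p => u = p.val.1
    | Sum.inr p, Sum.inr q => p.val.1 = q.val.2 ∧ p.val.2 = q.val.1
    | _, _ => False

/-- `𝒫'` is a refinement of `𝒫`. -/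
def Refines {G : SimpleGraph V} (P' P : NbhdPartition G) : Prop :=
  ∀ v : V, ∀ A ∈ P'.part v, ∃ B ∈ P.part v, A ⊆ B

/-- The graph obtained by contracting the two vertices `x` and `y` of `G` to the single
vertex `x` (the vertex `y` is removed, and `x` becomes adjacent to all former
neighbors of `y`). -/
def contractPair {W : Type*} (G : SimpleGraph W) (x y : W) :
    SimpleGraph {w : W // w ≠ y} :=
  SimpleGraph.fromRel fun a b =>
    G.Adj a.val b.val ∨ (a.val = x ∧ G.Adj y b.val) ∨ (b.val = x ∧ G.Adj a.val y)

/-- The graph obtained from `G` by attaching a path `(x, y, z)` (encoded as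
`Sum.inr 0, Sum.inr 1, Sum.inr 2`) to the vertex `v` via the edge `v x`. -/
def attachPath3 {W : Type*} (G : SimpleGraph W) (v : W) : SimpleGraph (W ⊕ Fin 3) :=
  SimpleGraph.fromRel fun a b =>
    match a, b with
    | Sum.inl u, Sum.inl w => G.Adj u w
    | Sum.inl u, Sum.inr i => u = v ∧ i = 0
    | Sum.inr i, Sum.inr j => (i = 0 ∧ j = 1) ∨ (i = 1 ∧ j = 2)
    | _, _ => False

/-- The graph obtained from `G` by attaching a path `(x, y)` (encoded as
`Sum.inr 0, Sum.inr 1`) to the vertex `v` via the edge `v x`. -/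
def attachPath2 {W : Type*} (G : SimpleGraph W) (v : W) : SimpleGraph (W ⊕ Fin 2) :=
  SimpleGraph.fromRel fun a b =>
    match a, b with
    | Sum.inl u, Sum.inl w => G.Adj u w
    | Sum.inl u, Sum.inr i => u = v ∧ i = 0
    | Sum.inr i, Sum.inr j => i = 0 ∧ j = 1
    | _, _ => False

/-- The family `𝓕` of labeled trees; the label of a vertex is `A` when it belongs to the
distinguished set `L`, and `B` otherwise.  The family contains the labeled path `P₄`
(leaves labeled `A`, support vertices labeled `B`) and is closed under the two
attachment operations. -/
inductive LabF : ∀ {W : Type}, SimpleGraph W → Set W → Prop where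
  | base : LabF (SimpleGraph.pathGraph 4) ({0, 3} : Set (Fin 4))
  | opA {W : Type} {G : SimpleGraph W} {L : Set W} (v : W) :
      LabF G L → v ∈ L →
        LabF (attachPath3 G v) (Sum.inl '' L ∪ {Sum.inr (2 : Fin 3)})
  | opB {W : Type} {G : SimpleGraph W} {L : Set W} (v : W) :
      LabF G L → v ∉ L →
        LabF (attachPath2 G v) (Sum.inl '' L ∪ {Sum.inr (1 : Fin 2)})

/-- A tree `T` belongs to the family `𝓕` if it admits a labeling constructed by the
above rules, i.e. it is isomorphic to a member of the inductively generated family. -/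
def MemF {W : Type*} (T : SimpleGraph W) : Prop :=
  ∃ (W' : Type) (G : SimpleGraph W') (L : Set W'), LabF G L ∧ Nonempty (T ≃g G)

/-!
Let `x v₁ v₂ …` be a longest path of `T`; it has length at least 2 and `x` is a leaf. If the
length is 2, `T` is a star and subdividing the edge `x v₁` already raises `γ`. Otherwise
subdivide `x v₁`, `v₁ v₂` and a third edge at `v₂`: the edge to a leaf of `v₂` if there is one,
and `v₂ v₃` if not, in which case maximality of the path makes every other neighbour of `v₂` a
support vertex. Subdividing no edge does not change `γ`, hence `sd(T) ≥ 1`.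

That `γ` increases is an exchange argument: from a dominating set `D'` of the subdivided tree keep
the original vertices outside a small set `S` around the subdivided edges, and add a set `A`
dominating `S`. `D'` meets disjoint closed neighbourhoods lying in `S` ∪ {subdivision vertices}
more than `|A|` times, so the resulting dominating set of `T` is smaller than `D'`.
-/

end GenCorona

namespace SimpleGraph

variable {V : Type*} {T : SimpleGraph V}

lemma IsAcyclic.isPath_cons_of_ne_snd (hT : T.IsAcyclic) {a b z : V} {p : T.Walk a b}
    (hp : p.IsPath) (hz : T.Adj z a) (hzp : z ≠ p.snd) : (Walk.cons hz p).IsPath :=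
  hp.cons fun hmem => hzp (hT.eq_snd_of_adj_start hp hz.symm hmem)

lemma IsAcyclic.eq_snd_of_adj_start_of_longest (hT : T.IsAcyclic) {N : ℕ}
    (hmax : ∀ {x y : V} (q : T.Walk x y), q.IsPath → q.length ≤ N) {a b z : V}
    {p : T.Walk a b} (hp : p.IsPath) (hlen : N ≤ p.length) (hz : T.Adj a z) : z = p.snd := by
  refine hT.eq_snd_of_adj_start hp hz (by_contra fun hzp => ?_)
  have := hmax _ (hp.cons hzp : (Walk.cons hz.symm p).IsPath)
  simp only [Walk.length_cons] at this
  omega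

lemma IsAcyclic.eq_of_adj_of_adj_start_of_longest (hT : T.IsAcyclic) {N : ℕ}
    (hmax : ∀ {x y : V} (q : T.Walk x y), q.IsPath → q.length ≤ N) {a b w c : V}
    {p : T.Walk a b} (hp : p.IsPath) (hlen : N ≤ p.length + 2) (hw : T.Adj a w)
    (hwp : w ≠ p.snd) (hc : T.Adj w c) (hca : c ≠ a) : ∀ z, T.Adj c z → z = w := by
  have hq := hT.isPath_cons_of_ne_snd (hT.isPath_cons_of_ne_snd hp hw.symm hwp) hc.symm
    (by simpa using hca)
  exact fun z hz => by
    simpa using hT.eq_snd_of_adj_start_of_longest hmax hq (by simpa using hlen) hz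

lemma exists_isPath_forall_length_le [Fintype V] [Nonempty V] (T : SimpleGraph V) :
    ∃ (x y : V) (p : T.Walk x y), p.IsPath ∧
      ∀ {x' y' : V} (q : T.Walk x' y'), q.IsPath → q.length ≤ p.length := by
  set L := {n | ∃ (x y : V) (p : T.Walk x y), p.IsPath ∧ p.length = n}
  have hbdd : BddAbove L := ⟨Fintype.card V, by
    rintro n ⟨x, y, p, hp, rfl⟩
    exact hp.length_lt.le⟩
  obtain ⟨x, y, p, hp, hlen⟩ := Nat.sSup_mem (s := L)
    ⟨0, Classical.arbitrary V, _, Walk.nil, Walk.IsPath.nil, rfl⟩ hbdd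
  exact ⟨x, y, p, hp, fun q hq => hlen ▸ le_csSup hbdd ⟨_, _, q, hq, rfl⟩⟩

lemma IsTree.two_le_length_of_longest [Fintype V] (hT : T.IsTree) (h3 : 3 ≤ Fintype.card V)
    {x y : V} {p : T.Walk x y} (hp : p.IsPath)
    (hmax : ∀ {x' y' : V} (q : T.Walk x' y'), q.IsPath → q.length ≤ p.length) :
    2 ≤ p.length := by
  classical
  by_contra! hlt
  obtain ⟨w, -, hw⟩ := Finset.exists_mem_notMem_of_card_lt_card (s := {x, p.snd})
    (t := Finset.univ) ((Finset.card_le_two).trans_lt (by rw [Finset.card_univ]; omega))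
  simp only [Finset.mem_insert, Finset.mem_singleton, not_or] at hw
  obtain ⟨q, hq⟩ := (hT.connected.preconnected x w).some.toPath
  have hq1 : q.length = 1 := by
    have := hmax q hq
    have : q.length ≠ 0 := mt Walk.eq_of_length_eq_zero (Ne.symm hw.1)
    omega
  exact hw.2 (hT.isAcyclic.eq_snd_of_adj_start_of_longest hmax hp le_rfl
    (Walk.adj_of_length_eq_one hq1))

end SimpleGraph

namespace GenCorona

section Domination

variable {W : Type*} {G : SimpleGraph W}

lemma dominationNumber_le_ncard {D : Set W} (hD : IsDominating G D) :
    dominationNumber G ≤ D.ncard :=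
  Nat.sInf_le ⟨D, hD, rfl⟩

lemma exists_isDominating_ncard_eq_dominationNumber [Finite W] (G : SimpleGraph W) :
    ∃ D, IsDominating G D ∧ D.ncard = dominationNumber G :=
  Nat.sInf_mem (s := {n | ∃ D : Set W, IsDominating G D ∧ D.ncard = n})
    ⟨_, Set.univ, fun v hv => (hv (Set.mem_univ v)).elim, rfl⟩

lemma dominationNumber_lt_of_forall_isDominating {W' : Type*} [Finite W'] {G' : SimpleGraph W'}
    (h : ∀ D', IsDominating G' D' → ∃ D, IsDominating G D ∧ D.ncard < D'.ncard) :
    dominationNumber G < dominationNumber G' := by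
  obtain ⟨D', hD', hcard⟩ := exists_isDominating_ncard_eq_dominationNumber G'
  obtain ⟨D, hD, hlt⟩ := h D' hD'
  exact hcard ▸ (dominationNumber_le_ncard hD).trans_lt hlt

end Domination

lemma ncard_preimage_inl_diff_union_lt {V X : Type*} [Finite V] [Finite X] {D' : Set (V ⊕ X)}
    {S A : Set V} (h : A.ncard < (D' ∩ (Sum.inl '' S ∪ Set.range Sum.inr)).ncard) :
    (Sum.inl ⁻¹' D' \ S ∪ A).ncard < D'.ncard := by
  have houter : (Sum.inl ⁻¹' D' \ S).ncard = (D' \ (Sum.inl '' S ∪ Set.range Sum.inr)).ncard := by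
    rw [← Set.ncard_image_of_injective _ Sum.inl_injective]
    congr 1
    ext (x | x) <;> simp
  calc (Sum.inl ⁻¹' D' \ S ∪ A).ncard ≤ (Sum.inl ⁻¹' D' \ S).ncard + A.ncard :=
        Set.ncard_union_le _ _
    _ < D'.ncard := by
      rw [houter, ← Set.ncard_inter_add_ncard_sdiff_eq_ncard D' (Sum.inl '' S ∪ Set.range Sum.inr)]
      omega

section Subdivision

variable {V : Type*} {T : SimpleGraph V} {F : Set (Sym2 V)}

@[simp]
lemma subdivide_adj_inl_inl {u v : V} :
    (subdivide T F).Adj (Sum.inl u) (Sum.inl v) ↔ T.Adj u v ∧ s(u, v) ∉ F := by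
  simp only [subdivide, fromRel_adj, ne_eq, Sum.inl.injEq]
  constructor
  · rintro ⟨-, h | ⟨h, hF⟩⟩
    · exact h
    · exact ⟨h.symm, Sym2.eq_swap ▸ hF⟩
  · exact fun h => ⟨h.1.ne, .inl h⟩

@[simp]
lemma subdivide_adj_inl_inr {u : V} {e : F} :
    (subdivide T F).Adj (Sum.inl u) (Sum.inr e) ↔ u ∈ (e : Sym2 V) := by
  simp [subdivide]

@[simp]
lemma subdivide_adj_inr_inl {u : V} {e : F} :
    (subdivide T F).Adj (Sum.inr e) (Sum.inl u) ↔ u ∈ (e : Sym2 V) := by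
  rw [adj_comm, subdivide_adj_inl_inr]

@[simp]
lemma not_subdivide_adj_inr_inr {e e' : F} : ¬ (subdivide T F).Adj (Sum.inr e) (Sum.inr e') := by
  simp [subdivide]

variable {D' : Set (V ⊕ F)}

lemma IsDominating.exists_of_inl_notMem (hD' : IsDominating (subdivide T F) D') {v : V}
    (hv : Sum.inl v ∉ D') :
    (∃ d, T.Adj v d ∧ s(v, d) ∉ F ∧ Sum.inl d ∈ D') ∨
      ∃ e : F, v ∈ (e : Sym2 V) ∧ Sum.inr e ∈ D' := by
  obtain ⟨d | e, hd, hadj⟩ := hD' _ hv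
  · exact .inl ⟨d, (subdivide_adj_inl_inl.1 hadj).1, (subdivide_adj_inl_inl.1 hadj).2, hd⟩
  · exact .inr ⟨e, subdivide_adj_inl_inr.1 hadj, hd⟩

lemma IsDominating.mem_or_mem_of_inr (hD' : IsDominating (subdivide T F) D') {e : F} {a b : V}
    (he : (e : Sym2 V) = s(a, b)) :
    Sum.inr e ∈ D' ∨ Sum.inl a ∈ D' ∨ Sum.inl b ∈ D' := by
  by_contra! h
  obtain ⟨d | e', hd, hadj⟩ := hD' _ h.1
  · rcases Sym2.mem_iff.1 (he ▸ subdivide_adj_inr_inl.1 hadj) with rfl | rfl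
    exacts [h.2.1 hd, h.2.2 hd]
  · exact not_subdivide_adj_inr_inr hadj

lemma IsDominating.inl_mem_or_inl_mem_of_leaf (hF : F ⊆ T.edgeSet)
    (hD' : IsDominating (subdivide T F) D') {v w : V} (hN : ∀ z, T.Adj v z → z = w)
    (hvw : s(v, w) ∉ F) : Sum.inl v ∈ D' ∨ Sum.inl w ∈ D' := by
  refine or_iff_not_imp_left.2 fun hv => ?_
  rcases hD'.exists_of_inl_notMem hv with ⟨d, hadj, -, hd⟩ | ⟨⟨e, heF⟩, hve, -⟩
  · exact hN d hadj ▸ hd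
  · obtain ⟨y, rfl⟩ := Sym2.mem_iff_exists.1 hve
    exact (hvw (hN y (hF heF) ▸ heF)).elim

lemma IsDominating.inl_mem_or_inr_mem_of_leaf (hF : F ⊆ T.edgeSet)
    (hD' : IsDominating (subdivide T F) D') {v w : V} (hN : ∀ z, T.Adj v z → z = w)
    (hvw : s(v, w) ∈ F) : Sum.inl v ∈ D' ∨ Sum.inr ⟨s(v, w), hvw⟩ ∈ D' := by
  refine or_iff_not_imp_left.2 fun hv => ?_
  rcases hD'.exists_of_inl_notMem hv with ⟨d, hadj, hdF, -⟩ | ⟨⟨e, heF⟩, hve, he⟩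
  · exact (hdF (hN d hadj ▸ hvw)).elim
  · obtain ⟨y, rfl⟩ := Sym2.mem_iff_exists.1 hve
    obtain rfl := hN y (hF heF)
    exact he

lemma IsDominating.preimage_inl_diff_union (hD' : IsDominating (subdivide T F) D')
    {S A : Set V} (hS : ∀ v ∈ S, v ∉ A → ∃ a ∈ A, T.Adj v a)
    (hF : ∀ e : F, Sum.inr e ∈ D' → ∀ v ∈ (e : Sym2 V), v ∉ S → ∃ a ∈ A, T.Adj v a)
    (hbd : ∀ v ∉ S, Sum.inl v ∉ D' → ∀ d ∈ S, T.Adj v d → s(v, d) ∉ F → Sum.inl d ∈ D' →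
      ∃ a ∈ Sum.inl ⁻¹' D' \ S ∪ A, T.Adj v a) :
    IsDominating T (Sum.inl ⁻¹' D' \ S ∪ A) := by
  intro v hv
  simp only [Set.mem_union, Set.mem_sdiff, Set.mem_preimage, not_or, not_and_not_right] at hv
  obtain ⟨hvR, hvA⟩ := hv
  by_cases hvS : v ∈ S
  · obtain ⟨a, ha, hadj⟩ := hS v hvS hvA
    exact ⟨a, .inr ha, hadj⟩
  have hvD : Sum.inl v ∉ D' := fun h => hvS (hvR h)
  rcases hD'.exists_of_inl_notMem hvD with ⟨d, hadj, hdF, hd⟩ | ⟨e, hve, he⟩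
  · by_cases hdS : d ∈ S
    · exact hbd v hvS hvD d hdS hadj hdF hd
    · exact ⟨d, .inl ⟨hd, hdS⟩, hadj⟩
  · obtain ⟨a, ha, hadj⟩ := hF e he v hve hvS
    exact ⟨a, .inr ha, hadj⟩

end Subdivision

section SubdividedPaths

variable {V : Type*} [Finite V] {T : SimpleGraph V}

theorem dominationNumber_lt_subdivide_of_two_leaves {v0 v1 l : V} (h01 : T.Adj v0 v1)
    (hl : T.Adj l v1) (hv0l : v0 ≠ l) (hN0 : ∀ z, T.Adj v0 z → z = v1)
    (hNl : ∀ z, T.Adj l z → z = v1) :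
    dominationNumber T < dominationNumber (subdivide T {s(v0, v1)}) := by
  have hF : {s(v0, v1)} ⊆ T.edgeSet := by simpa using h01
  have hlF : s(l, v1) ∉ ({s(v0, v1)} : Set (Sym2 V)) := by simp [hv0l.symm, hl.ne]
  refine dominationNumber_lt_of_forall_isDominating fun D' hD' => ⟨_,
    hD'.preimage_inl_diff_union (S := {v0, v1, l}) (A := {v1}) ?_ ?_ ?_,
    ncard_preimage_inl_diff_union_lt ?_⟩
  · simp only [Set.mem_insert_iff, Set.mem_singleton_iff, exists_eq_left]
    rintro v (rfl | rfl | rfl) hv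
    exacts [h01, (hv rfl).elim, hl]
  · rintro ⟨e, he⟩ - v hv hvS
    obtain rfl : e = s(v0, v1) := he
    rcases Sym2.mem_iff.1 hv with rfl | rfl <;> simp at hvS
  · simp only [Set.mem_insert_iff, Set.mem_singleton_iff]
    rintro v hvS - d (rfl | rfl | rfl) hadj - -
    · exact (hvS (.inr (.inl (hN0 v hadj.symm)))).elim
    · exact ⟨_, .inr rfl, hadj⟩
    · exact (hvS (.inr (.inl (hNl v hadj.symm)))).elim
  · rw [Set.ncard_singleton, Set.one_lt_ncard_iff]
    rcases hD'.inl_mem_or_inr_mem_of_leaf hF hN0 rfl with ha | ha <;>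
      rcases hD'.inl_mem_or_inl_mem_of_leaf hF hNl hlF with hb | hb <;>
      exact ⟨_, _, ⟨ha, by simp⟩, ⟨hb, by simp⟩, by simp [hv0l, h01.ne]⟩

theorem dominationNumber_lt_subdivide_of_leaf_path {v0 v1 v2 l : V} (h01 : T.Adj v0 v1)
    (h12 : T.Adj v1 v2) (h2l : T.Adj v2 l) (hlv1 : l ≠ v1) (h02 : v0 ≠ v2)
    (hN0 : ∀ z, T.Adj v0 z → z = v1) (hNl : ∀ z, T.Adj l z → z = v2) :
    dominationNumber T < dominationNumber (subdivide T {s(v0, v1), s(v1, v2), s(v2, l)}) := by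
  have hlv0 : l ≠ v0 := by
    rintro rfl
    exact h12.ne (hN0 v2 h2l.symm).symm
  set F : Set (Sym2 V) := {s(v0, v1), s(v1, v2), s(v2, l)}
  have hF : F ⊆ T.edgeSet := by simp [F, Set.insert_subset_iff, h01, h12, h2l]
  refine dominationNumber_lt_of_forall_isDominating fun D' hD' => ⟨_,
    hD'.preimage_inl_diff_union (S := {v0, v1, v2, l}) (A := {v1, v2}) ?_ ?_ ?_,
    ncard_preimage_inl_diff_union_lt ?_⟩
  · simp only [Set.mem_insert_iff, Set.mem_singleton_iff, exists_eq_or_imp, exists_eq_left]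
    rintro v (rfl | rfl | rfl | rfl) hv
    exacts [.inl h01, (hv (.inl rfl)).elim, (hv (.inr rfl)).elim, .inr h2l.symm]
  · rintro ⟨e, he⟩ - v hv hvS
    rcases he with rfl | rfl | rfl <;> rcases Sym2.mem_iff.1 hv with rfl | rfl <;> simp at hvS
  · simp only [Set.mem_insert_iff, Set.mem_singleton_iff]
    rintro v hvS - d (rfl | rfl | rfl | rfl) hadj - -
    · exact (hvS (.inr (.inl (hN0 v hadj.symm)))).elim
    · exact ⟨_, .inr (.inl rfl), hadj⟩
    · exact ⟨_, .inr (.inr rfl), hadj⟩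
    · exact (hvS (.inr (.inr (.inl (hNl v hadj.symm))))).elim
  · refine (Set.ncard_pair h12.ne).trans_lt ((Set.two_lt_ncard_iff).2 ?_)
    rcases hD'.inl_mem_or_inr_mem_of_leaf hF hN0 (by simp [F]) with ha | ha <;>
      rcases hD'.mem_or_mem_of_inr (e := ⟨s(v1, v2), by simp [F]⟩) rfl with hb | hb | hb <;>
      rcases hD'.inl_mem_or_inr_mem_of_leaf hF hNl (by simp [F, Sym2.eq_swap]) with hc | hc <;>
      exact ⟨_, _, _, ⟨ha, by simp⟩, ⟨hb, by simp⟩, ⟨hc, by simp⟩,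
        by simp [h01.ne, h02, hlv0.symm, h12.ne, h2l.ne, hlv1.symm]⟩

theorem IsDominating.exists_isDominating_ncard_lt_of_inr_mem {v0 v1 v2 v3 : V}
    (h01 : T.Adj v0 v1) (h12 : T.Adj v1 v2) (h23 : T.Adj v2 v3) (h02 : v0 ≠ v2) (h13 : v1 ≠ v3)
    (hN0 : ∀ z, T.Adj v0 z → z = v1)
    {D' : Set (V ⊕ ({s(v0, v1), s(v1, v2), s(v2, v3)} : Set (Sym2 V)))}
    (hD' : IsDominating (subdivide T {s(v0, v1), s(v1, v2), s(v2, v3)}) D')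
    (hx3 : Sum.inr ⟨s(v2, v3), by simp⟩ ∈ D') :
    ∃ D, IsDominating T D ∧ D.ncard < D'.ncard := by
  have h03 : v0 ≠ v3 := by
    rintro rfl
    exact h12.ne (hN0 v2 h23.symm).symm
  have hF : {s(v0, v1), s(v1, v2), s(v2, v3)} ⊆ T.edgeSet := by
    simp [Set.insert_subset_iff, h01, h12, h23]
  refine ⟨_, hD'.preimage_inl_diff_union (S := {v0, v1, v2}) (A := {v1, v2}) ?_ ?_ ?_,
    ncard_preimage_inl_diff_union_lt ?_⟩
  · simp only [Set.mem_insert_iff, Set.mem_singleton_iff, exists_eq_or_imp, exists_eq_left]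
    rintro v (rfl | rfl | rfl) hv
    exacts [.inl h01, (hv (.inl rfl)).elim, (hv (.inr rfl)).elim]
  · rintro ⟨e, he⟩ - v hv hvS
    rcases he with rfl | rfl | rfl <;> rcases Sym2.mem_iff.1 hv with rfl | rfl <;> simp at hvS
    exact ⟨_, .inr rfl, h23.symm⟩
  · simp only [Set.mem_insert_iff, Set.mem_singleton_iff]
    rintro v hvS - d (rfl | rfl | rfl) hadj - -
    · exact (hvS (.inr (.inl (hN0 v hadj.symm)))).elim
    · exact ⟨_, .inr (.inl rfl), hadj⟩
    · exact ⟨_, .inr (.inr rfl), hadj⟩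
  · refine (Set.ncard_pair h12.ne).trans_lt ((Set.two_lt_ncard_iff).2 ?_)
    rcases hD'.inl_mem_or_inr_mem_of_leaf hF hN0 (by simp) with ha | ha <;>
      rcases hD'.mem_or_mem_of_inr (e := ⟨s(v1, v2), by simp⟩) rfl with hb | hb | hb <;>
      exact ⟨_, _, _, ⟨ha, by simp⟩, ⟨hb, by simp⟩, ⟨hx3, by simp⟩,
        by simp [h01.ne, h02, h03, h12.ne, h23.ne, h13]⟩

theorem IsDominating.exists_isDominating_ncard_lt_of_inr_notMem {v0 v1 v2 v3 : V}
    (h01 : T.Adj v0 v1) (h12 : T.Adj v1 v2) (h23 : T.Adj v2 v3) (h02 : v0 ≠ v2)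
    (hN0 : ∀ z, T.Adj v0 z → z = v1)
    (hsupp : ∀ w, T.Adj v2 w → w ≠ v1 → w ≠ v3 → ∃ c, T.Adj w c ∧ ∀ z, T.Adj c z → z = w)
    {D' : Set (V ⊕ ({s(v0, v1), s(v1, v2), s(v2, v3)} : Set (Sym2 V)))}
    (hD' : IsDominating (subdivide T {s(v0, v1), s(v1, v2), s(v2, v3)}) D')
    (hx3 : Sum.inr ⟨s(v2, v3), by simp⟩ ∉ D') :
    ∃ D, IsDominating T D ∧ D.ncard < D'.ncard := by
  have hF : {s(v0, v1), s(v1, v2), s(v2, v3)} ⊆ T.edgeSet := by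
    simp [Set.insert_subset_iff, h01, h12, h23]
  refine ⟨_, hD'.preimage_inl_diff_union (S := {v0, v1, v2}) (A := {v1}) ?_ ?_ ?_,
    ncard_preimage_inl_diff_union_lt ?_⟩
  · simp only [Set.mem_insert_iff, Set.mem_singleton_iff, exists_eq_left]
    rintro v (rfl | rfl | rfl) hv
    exacts [h01, (hv rfl).elim, h12.symm]
  · rintro ⟨e, he⟩ hxe v hv hvS
    rcases he with rfl | rfl | rfl
    · rcases Sym2.mem_iff.1 hv with rfl | rfl <;> simp at hvS
    · rcases Sym2.mem_iff.1 hv with rfl | rfl <;> simp at hvS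
    · exact (hx3 hxe).elim
  · rintro v hvS hvD d hdS hadj hdF -
    simp only [Set.mem_insert_iff, Set.mem_singleton_iff, not_or] at hvS hdS
    obtain ⟨hv0, hv1, hv2⟩ := hvS
    rcases hdS with rfl | rfl | rfl
    · exact (hv1 (hN0 v hadj.symm)).elim
    · exact ⟨_, .inr rfl, hadj⟩
    have hv3 : v ≠ v3 := by
      rintro rfl
      exact hdF (by simp [Sym2.eq_swap])
    obtain ⟨c, hc, hNc⟩ := hsupp v hadj.symm hv1 hv3
    have hcD := hD'.inl_mem_or_inl_mem_of_leaf hF hNc (by simp [hv0, hv1, hv2, hv3])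
    refine ⟨c, .inl ⟨hcD.resolve_right hvD, ?_⟩, hc⟩
    simp only [Set.mem_insert_iff, Set.mem_singleton_iff]
    rintro (rfl | rfl | rfl)
    · exact hv1 (hN0 v hc.symm)
    · exact hv0 (hNc v0 h01.symm).symm
    · exact hv1 (hNc v1 h12.symm).symm
  · rw [Set.ncard_singleton, Set.one_lt_ncard_iff]
    rcases hD'.inl_mem_or_inr_mem_of_leaf hF hN0 (by simp) with ha | ha <;>
      rcases hD'.mem_or_mem_of_inr (e := ⟨s(v1, v2), by simp⟩) rfl with hb | hb | hb <;>
      exact ⟨_, _, ⟨ha, by simp⟩, ⟨hb, by simp⟩, by simp [h01.ne, h02, h12.ne]⟩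

theorem dominationNumber_lt_subdivide_of_supports {v0 v1 v2 v3 : V} (h01 : T.Adj v0 v1)
    (h12 : T.Adj v1 v2) (h23 : T.Adj v2 v3) (h02 : v0 ≠ v2) (h13 : v1 ≠ v3)
    (hN0 : ∀ z, T.Adj v0 z → z = v1)
    (hsupp : ∀ w, T.Adj v2 w → w ≠ v1 → w ≠ v3 → ∃ c, T.Adj w c ∧ ∀ z, T.Adj c z → z = w) :
    dominationNumber T < dominationNumber (subdivide T {s(v0, v1), s(v1, v2), s(v2, v3)}) := by
  refine dominationNumber_lt_of_forall_isDominating fun D' hD' => ?_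
  by_cases hx3 : Sum.inr ⟨s(v2, v3), by simp⟩ ∈ D'
  · exact hD'.exists_isDominating_ncard_lt_of_inr_mem h01 h12 h23 h02 h13 hN0 hx3
  · exact hD'.exists_isDominating_ncard_lt_of_inr_notMem h01 h12 h23 h02 hN0 hsupp hx3

end SubdividedPaths

theorem exists_subdivide_dominationNumber_lt_of_isTree {V : Type*} [Fintype V]
    {T : SimpleGraph V} (hT : T.IsTree) (h3 : 3 ≤ Fintype.card V) :
    ∃ F ⊆ T.edgeSet, F.ncard ≤ 3 ∧ dominationNumber T < dominationNumber (subdivide T F) := by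
  have : Nonempty V := Fintype.card_pos_iff.1 (by omega)
  obtain ⟨x, y, p, hp, hmax⟩ := exists_isPath_forall_length_le T
  have h2 := hT.two_le_length_of_longest h3 hp hmax
  have hN0 := fun z => hT.isAcyclic.eq_snd_of_adj_start_of_longest hmax hp le_rfl (z := z)
  rcases p with _ | ⟨h01, _ | ⟨h12, _ | ⟨h23, p3⟩⟩⟩
  · simp at h2
  · simp at h2
  · rename_i v1
    have hx2 : x ≠ y := by
      simp only [Walk.cons_isPath_iff, Walk.support_cons, Walk.support_nil, List.mem_cons,
        List.not_mem_nil, or_false, not_or] at hp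
      exact hp.2.2
    have hN2 : ∀ z, T.Adj y z → z = v1 := fun z hz => by
      simpa using hT.isAcyclic.eq_snd_of_adj_start_of_longest hmax hp.reverse (by simp) hz
    exact ⟨{s(x, v1)}, by simpa using h01, by simp,
      dominationNumber_lt_subdivide_of_two_leaves h01 h12.symm hx2 (by simpa using hN0) hN2⟩
  · rename_i v1 v2 v3
    have hdist := hp.support_nodup
    simp only [Walk.support_cons, List.nodup_cons, List.mem_cons, not_or] at hdist
    have hx2 : x ≠ v2 := hdist.1.2.1
    have h13 : v1 ≠ v3 := fun h => hdist.2.1.2 (h ▸ p3.start_mem_support)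
    simp only [Walk.snd_cons] at hN0
    have hcard : ∀ a b c : Sym2 V, ({a, b, c} : Set (Sym2 V)).ncard ≤ 3 := fun a b c =>
      (Set.ncard_insert_le _ _).trans (Nat.succ_le_succ ((Set.ncard_insert_le _ _).trans (by simp)))
    by_cases hl : ∃ l, T.Adj v2 l ∧ l ≠ v1 ∧ ∀ z, T.Adj l z → z = v2
    · obtain ⟨l, h2l, hlv1, hNl⟩ := hl
      exact ⟨_, by simp [Set.insert_subset_iff, h01, h12, h2l], hcard _ _ _,
        dominationNumber_lt_subdivide_of_leaf_path h01 h12 h2l hlv1 hx2 hN0 hNl⟩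
    · push Not at hl
      refine ⟨_, by simp [Set.insert_subset_iff, h01, h12, h23], hcard _ _ _,
        dominationNumber_lt_subdivide_of_supports h01 h12 h23 hx2 h13 hN0 fun w hw hw1 hw3 => ?_⟩
      obtain ⟨c, hc, hc2⟩ := hl w hw hw1
      exact ⟨c, hc, hT.isAcyclic.eq_of_adj_of_adj_start_of_longest hmax hp.of_cons.of_cons
        (by simp) hw (by simpa using hw3) hc hc2⟩

section SubdivisionNumber

variable {V : Type*} {T : SimpleGraph V} {F : Set (Sym2 V)}

lemma dominationNumber_subdivide_empty_le [Finite V] (T : SimpleGraph V) :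
    dominationNumber (subdivide T ∅) ≤ dominationNumber T := by
  obtain ⟨D, hD, hcard⟩ := exists_isDominating_ncard_eq_dominationNumber T
  rw [← hcard, ← Set.ncard_image_of_injective D (Sum.inl_injective (β := (∅ : Set (Sym2 V))))]
  refine dominationNumber_le_ncard ?_
  rintro (v | ⟨e, he⟩) hv
  · obtain ⟨d, hd, hadj⟩ := hD v fun h => hv ⟨v, h, rfl⟩
    exact ⟨_, ⟨d, hd, rfl⟩, by simpa using hadj⟩
  · exact he.elim

lemma sd_le_ncard_of_dominationNumber_lt (hF : F ⊆ T.edgeSet)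
    (hlt : dominationNumber T < dominationNumber (subdivide T F)) : sd T ≤ F.ncard :=
  Nat.sInf_le ⟨F, hF, rfl, hlt⟩

lemma one_le_sd_of_dominationNumber_lt [Finite V] (hF : F ⊆ T.edgeSet)
    (hlt : dominationNumber T < dominationNumber (subdivide T F)) : 1 ≤ sd T := by
  obtain ⟨F', -, hcard, hlt'⟩ := Nat.sInf_mem (s := {k | ∃ F : Set (Sym2 V), F ⊆ T.edgeSet ∧
    F.ncard = k ∧ dominationNumber T < dominationNumber (subdivide T F)}) ⟨_, F, hF, rfl, hlt⟩
  refine Nat.one_le_iff_ne_zero.2 fun h0 => ?_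
  obtain rfl : F' = ∅ := (Set.ncard_eq_zero).1 (hcard.trans h0)
  exact (dominationNumber_subdivide_empty_le T).not_gt hlt'

end SubdivisionNumber

/-- The domination subdivision number of every finite tree with at least
three vertices satisfies `1 ≤ sd(T) ≤ 3`. -/
theorem one_le_sd_and_sd_le_three {V : Type u} [Fintype V]
    (T : SimpleGraph V) (hT : T.IsTree) (h3 : 3 ≤ Fintype.card V) :
    1 ≤ sd T ∧ sd T ≤ 3 := by
  obtain ⟨F, hF, hcard, hlt⟩ := exists_subdivide_dominationNumber_lt_of_isTree hT h3
  exact ⟨one_le_sd_of_dominationNumber_lt hF hlt,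
    (sd_le_ncard_of_dominationNumber_lt hF hlt).trans hcard⟩

end GenCorona
end

section
/- Let T be a finite tree such that the general corona T∘𝒫 has at least three vertices, for a vertex neighborhood partition 𝒫 of T. Then the set Ext(T∘𝒫) of external vertices is the unique dominating 2-packing of T∘𝒫 containing all leaves of T∘𝒫. -/
open SimpleGraph

/-!
The external vertices dominate (every `(v, A)` hangs on `(v, 1)`), are pairwise at distance at
least three (a common neighbour of `(u, 1)` and `(w, 1)` is some `(u, A) = (w, B)`), and contain
every leaf (an internal `(v, A)` is adjacent to `(v, 1)` and to some `(u, B)` with `u ∈ A`).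

Conversely, let `S` be a dominating 2-packing. If `(v, A) ∈ S`, one finds `(u, B) ∈ S` with
`u ∈ A` and `v ∉ B`; iterating yields a walk `v, u, …` in `T` that never immediately returns,
which is a path in an acyclic graph and so cannot be infinite in a finite one. Hence `S` has
no internal vertex, and since it dominates every `(v, 1)`, it is exactly `Ext`.
-/

namespace SimpleGraph

variable {V : Type*} {G : SimpleGraph V}

def walkOfSeq (f : ℕ → V) (hf : ∀ n, G.Adj (f n) (f (n + 1))) : ∀ n, G.Walk (f n) (f 0)
  | 0 => .nil
  | n + 1 => .cons (hf n).symm (walkOfSeq f hf n)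

lemma length_walkOfSeq (f : ℕ → V) (hf : ∀ n, G.Adj (f n) (f (n + 1))) (n : ℕ) :
    (walkOfSeq f hf n).length = n := by
  induction n with
  | zero => rfl
  | succ n ih => simp [walkOfSeq, ih]

lemma IsAcyclic.isPath_walkOfSeq (hG : G.IsAcyclic) (f : ℕ → V)
    (hf : ∀ n, G.Adj (f n) (f (n + 1))) (hback : ∀ n, f (n + 2) ≠ f n) (n : ℕ) :
    (walkOfSeq f hf n).IsPath := by
  induction n with
  | zero => exact .nil
  | succ n ih =>
    refine ih.cons fun hmem => ?_
    have hsnd := hG.eq_snd_of_adj_start ih (hf n) hmem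
    cases n with
    | zero => exact (hf 0).ne' (by simpa [walkOfSeq] using hsnd)
    | succ m => exact hback m (by simpa [walkOfSeq] using hsnd)

lemma IsAcyclic.not_nonbacktracking_seq [Finite V] (hG : G.IsAcyclic) (f : ℕ → V)
    (hf : ∀ n, G.Adj (f n) (f (n + 1))) (hback : ∀ n, f (n + 2) ≠ f n) : False := by
  have := Fintype.ofFinite V
  have hlt := (hG.isPath_walkOfSeq f hf hback (Fintype.card V)).length_lt
  rw [length_walkOfSeq] at hlt
  exact lt_irrefl _ hlt

end SimpleGraph

namespace GenCorona

universe u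

variable {V : Type u}

section Packing

variable {W : Type*} {H : SimpleGraph W} {S : Set W}

lemma is2Packing_iff : Is2Packing H S ↔
    (∀ x ∈ S, ∀ y ∈ S, ¬H.Adj x y) ∧
      ∀ x ∈ S, ∀ z ∈ S, ∀ y, H.Adj x y → H.Adj y z → x = z := by
  simp only [Is2Packing, SimpleGraph.two_lt_edist_iff, Set.eq_empty_iff_forall_notMem,
    SimpleGraph.mem_commonNeighbors]
  constructor
  · intro h
    refine ⟨fun x hx y hy hxy => (h x hx y hy hxy.ne).2.1 hxy, fun x hx z hz y hxy hyz => ?_⟩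
    by_contra hxz
    exact (h x hx z hz hxz).2.2 y ⟨hxy, hyz.symm⟩
  · rintro ⟨hadj, hcommon⟩ x hx y hy hxy
    exact ⟨hxy, hadj x hx y hy, fun z hz => hxy (hcommon x hx y hy z hz.1 hz.2.symm)⟩

lemma Is2Packing.not_adj (hS : Is2Packing H S) {x y : W} (hx : x ∈ S) (hy : y ∈ S) :
    ¬H.Adj x y :=
  (is2Packing_iff.mp hS).1 x hx y hy

lemma Is2Packing.eq_of_adj_of_adj (hS : Is2Packing H S) {x y z : W} (hx : x ∈ S) (hz : z ∈ S)
    (hxy : H.Adj x y) (hyz : H.Adj y z) : x = z :=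
  (is2Packing_iff.mp hS).2 x hx z hz y hxy hyz

end Packing

abbrev InternalVert (G : SimpleGraph V) (P : NbhdPartition G) : Type u :=
  {p : V × Set V // p.2 ∈ P.part p.1}

variable {G : SimpleGraph V} {P : NbhdPartition G}

@[simp]
lemma corona_not_adj_inl_inl {u v : V} : ¬(corona G P).Adj (Sum.inl u) (Sum.inl v) :=
  fun h => h.2.elim id id

@[simp]
lemma corona_adj_inl_inr {v : V} {p : InternalVert G P} :
    (corona G P).Adj (Sum.inl v) (Sum.inr p) ↔ v = p.val.1 := by
  simp [corona]

@[simp]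
lemma corona_adj_inr_inl {v : V} {p : InternalVert G P} :
    (corona G P).Adj (Sum.inr p) (Sum.inl v) ↔ p.val.1 = v := by
  rw [SimpleGraph.adj_comm, corona_adj_inl_inr, eq_comm]

@[simp]
lemma corona_adj_inr_inr {p q : InternalVert G P} :
    (corona G P).Adj (Sum.inr p) (Sum.inr q) ↔
      G.Adj p.val.1 q.val.1 ∧ q.val.1 ∈ p.val.2 ∧ p.val.1 ∈ q.val.2 := by
  simp only [corona, SimpleGraph.fromRel_adj, ne_eq, Sum.inr.injEq, G.adj_comm q.val.1]
  constructor
  · rintro ⟨-, h | ⟨hadj, hp, hq⟩⟩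
    exacts [h, ⟨hadj, hq, hp⟩]
  · rintro ⟨hadj, hq, hp⟩
    exact ⟨fun h => hadj.ne (by rw [h]), .inl ⟨hadj, hq, hp⟩⟩

lemma exists_corona_adj_inr (p : InternalVert G P) {u : V} (hu : u ∈ p.val.2) :
    ∃ q : InternalVert G P, q.val.1 = u ∧ (corona G P).Adj (Sum.inr p) (Sum.inr q) := by
  have hadj : G.Adj p.val.1 u := P.subset_nbhd _ _ p.property hu
  obtain ⟨B, hB, hvB⟩ := P.covers u p.val.1 hadj.symm
  exact ⟨⟨(u, B), hB⟩, rfl, corona_adj_inr_inr.mpr ⟨hadj, hu, hvB⟩⟩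

@[simp]
lemma inl_mem_ext (v : V) : (Sum.inl v : CoronaVert G P) ∈ Ext G P := ⟨v, rfl⟩

@[simp]
lemma inr_notMem_ext (p : InternalVert G P) : (Sum.inr p : CoronaVert G P) ∉ Ext G P := by
  rintro ⟨v, hv⟩
  exact Sum.inl_ne_inr hv

lemma isDominating_ext : IsDominating (corona G P) (Ext G P) := by
  rintro (v | p) hx
  · exact absurd (inl_mem_ext v) hx
  · exact ⟨Sum.inl p.val.1, inl_mem_ext _, corona_adj_inr_inl.mpr rfl⟩

lemma is2Packing_ext : Is2Packing (corona G P) (Ext G P) := by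
  refine is2Packing_iff.mpr ⟨?_, ?_⟩
  · rintro _ ⟨u, rfl⟩ _ ⟨v, rfl⟩
    exact corona_not_adj_inl_inl
  · rintro _ ⟨u, rfl⟩ _ ⟨w, rfl⟩ (v | q) hu hw
    · exact absurd hu corona_not_adj_inl_inl
    · rw [corona_adj_inl_inr.mp hu, corona_adj_inr_inl.mp hw]

lemma not_isLeaf_inr (p : InternalVert G P) : ¬IsLeaf (corona G P) (Sum.inr p) := by
  intro hleaf
  obtain ⟨a, ha⟩ := Set.ncard_eq_one.mp hleaf
  obtain ⟨u, hu⟩ := P.nonempty _ _ p.property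
  obtain ⟨q, -, hq⟩ := exists_corona_adj_inr p hu
  have hext : Sum.inl p.val.1 ∈ (corona G P).neighborSet (Sum.inr p) :=
    corona_adj_inr_inl.mpr rfl
  have hint : Sum.inr q ∈ (corona G P).neighborSet (Sum.inr p) := hq
  rw [ha] at hext hint
  exact Sum.inl_ne_inr (hext.trans hint.symm)

lemma mem_ext_of_isLeaf : ∀ x : CoronaVert G P, IsLeaf (corona G P) x → x ∈ Ext G P
  | Sum.inl v, _ => inl_mem_ext v
  | Sum.inr p, hleaf => absurd hleaf (not_isLeaf_inr p)

section Uniqueness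

variable {S : Set (CoronaVert G P)}

lemma inl_notMem_of_inr_mem (hS : Is2Packing (corona G P) S) {p : InternalVert G P}
    (hp : Sum.inr p ∈ S) {u : V} (hu : u ∈ p.val.2) : Sum.inl u ∉ S := by
  intro huS
  obtain ⟨q, rfl, hpq⟩ := exists_corona_adj_inr p hu
  exact Sum.inl_ne_inr (hS.eq_of_adj_of_adj huS hp (corona_adj_inl_inr.mpr rfl) hpq.symm)

lemma exists_inr_mem_of_inl_notMem (hS : IsDominating (corona G P) S) {v : V}
    (hv : Sum.inl v ∉ S) : ∃ q : InternalVert G P, q.val.1 = v ∧ Sum.inr q ∈ S := by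
  obtain ⟨w | q, hq, hadj⟩ := hS _ hv
  · exact absurd hadj corona_not_adj_inl_inl
  · exact ⟨q, (corona_adj_inl_inr.mp hadj).symm, hq⟩

/-- For `u ∈ A`, the vertex `(u, 1)` is at distance two from `(v, A)`, so `S` misses it and
dominates it by some `(u, B)`; and `v ∉ B`, as otherwise `(u, B)` and `(v, A)` are adjacent. -/
lemma exists_next_inr_mem (hdom : IsDominating (corona G P) S)
    (hpack : Is2Packing (corona G P) S) {p : InternalVert G P} (hp : Sum.inr p ∈ S) :
    ∃ q : InternalVert G P, Sum.inr q ∈ S ∧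
      G.Adj p.val.1 q.val.1 ∧ q.val.1 ∈ p.val.2 ∧ p.val.1 ∉ q.val.2 := by
  obtain ⟨u, hu⟩ := P.nonempty _ _ p.property
  obtain ⟨q, rfl, hq⟩ := exists_inr_mem_of_inl_notMem hdom (inl_notMem_of_inr_mem hpack hp hu)
  have hadj : G.Adj p.val.1 q.val.1 := P.subset_nbhd _ _ p.property hu
  exact ⟨q, hq, hadj, hu,
    fun hpq => hpack.not_adj hp hq (corona_adj_inr_inr.mpr ⟨hadj, hu, hpq⟩)⟩

lemma inr_notMem_of_isAcyclic [Finite V] (hG : G.IsAcyclic) (hdom : IsDominating (corona G P) S)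
    (hpack : Is2Packing (corona G P) S) (p : InternalVert G P) : Sum.inr p ∉ S := by
  intro hp
  choose next hnextS hnext using
    fun x : {q : InternalVert G P // Sum.inr q ∈ S} => exists_next_inr_mem hdom hpack x.property
  let step (x : {q : InternalVert G P // Sum.inr q ∈ S}) :
      {q : InternalVert G P // Sum.inr q ∈ S} := ⟨next x, hnextS x⟩
  let f (n : ℕ) : V := (step^[n] ⟨p, hp⟩).val.val.1
  refine hG.not_nonbacktracking_seq f (fun n => ?_) (fun n hback => ?_)
  · simpa only [f, Function.iterate_succ_apply'] using (hnext _).1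
  · have hmem := (hnext (step^[n + 1] ⟨p, hp⟩)).2.1
    have hnotMem := (hnext (step^[n] ⟨p, hp⟩)).2.2
    simp only [f, Function.iterate_succ_apply'] at hback hmem
    exact hnotMem (hback ▸ hmem)

lemma eq_ext_of_isDominating_of_is2Packing [Finite V] (hG : G.IsAcyclic)
    (hdom : IsDominating (corona G P) S) (hpack : Is2Packing (corona G P) S) : S = Ext G P := by
  have hint := inr_notMem_of_isAcyclic hG hdom hpack
  ext (v | p)
  · refine iff_of_true (by_contra fun hv => ?_) (inl_mem_ext v)
    obtain ⟨q, -, hq⟩ := exists_inr_mem_of_inl_notMem hdom hv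
    exact hint q hq
  · exact iff_of_false (hint p) (inr_notMem_ext p)

end Uniqueness

theorem ext_unique_dominating_packing_general {V : Type u} [Fintype V]
    (T : SimpleGraph V) (hT : T.IsTree) (P : NbhdPartition T) :
    (IsDominating (corona T P) (Ext T P) ∧ Is2Packing (corona T P) (Ext T P) ∧
        ∀ x : CoronaVert T P, IsLeaf (corona T P) x → x ∈ Ext T P) ∧
      ∀ S : Set (CoronaVert T P),
        IsDominating (corona T P) S → Is2Packing (corona T P) S →
          (∀ x : CoronaVert T P, IsLeaf (corona T P) x → x ∈ S) → S = Ext T P :=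
  ⟨⟨isDominating_ext, is2Packing_ext, mem_ext_of_isLeaf⟩,
    fun _ hdom hpack _ => eq_ext_of_isDominating_of_is2Packing hT.isAcyclic hdom hpack⟩

/-- If the general corona `T ∘ 𝒫` of a finite tree `T` has at least three
vertices, then its set of external vertices is the unique dominating 2-packing of
`T ∘ 𝒫` containing all leaves of `T ∘ 𝒫`. -/
theorem ext_unique_dominating_packing {V : Type u} [Fintype V]
    (T : SimpleGraph V) (hT : T.IsTree) (P : NbhdPartition T)
    (h3 : 3 ≤ Nat.card (CoronaVert T P)) :
    (IsDominating (corona T P) (Ext T P) ∧ Is2Packing (corona T P) (Ext T P) ∧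
        ∀ x : CoronaVert T P, IsLeaf (corona T P) x → x ∈ Ext T P) ∧
      ∀ S : Set (CoronaVert T P),
        IsDominating (corona T P) S → Is2Packing (corona T P) S →
          (∀ x : CoronaVert T P, IsLeaf (corona T P) x → x ∈ S) → S = Ext T P :=
  ext_unique_dominating_packing_general T hT P

end GenCorona
end
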